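/- (Appendix D: inner-envelope semicircle bound, equations (D9)–(D11), generalising Howard's semicircle theorem.) Assume the additional Appendix D setup. Let k ≥ 0 and let (c, ψ) be an unstable mode, c = c_r + i·c_i with c_i ≠ 0. Then for every real number r_c, (c_r − r_c)² + c_i² ≤ R(r_c)², where R(r_c)² = max_{y ∈ [−L/2, L/2]} (U(y) − r_c)² + (1/(κ₀² + k²))·max( 0, max_{y ∈ [−L/2, L/2]} (r_c − U(y))·B(y) ). -/

import Mathlib

open Set

noncomputable section

/-- An unstable mode for wavenumber `k`: a pair `(c, ψ)` (with derivative data `ψ', ψ''`)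
with `Im c ≠ 0`, `ψ` twice continuously differentiable on `[-L/2, L/2]`, not identically
zero, vanishing at the boundary, and satisfying the eigenvalue equation. -/
def IsUnstableMode (L Ld k : ℝ) (U q : ℝ → ℝ) (c : ℂ) (ψ ψ' ψ'' : ℝ → ℂ) : Prop :=
  c.im ≠ 0 ∧
  (∀ y ∈ Icc (-L/2) (L/2), HasDerivAt ψ (ψ' y) y) ∧
  (∀ y ∈ Icc (-L/2) (L/2), HasDerivAt ψ' (ψ'' y) y) ∧
  ContinuousOn ψ'' (Icc (-L/2) (L/2)) ∧
  (∃ y ∈ Icc (-L/2) (L/2), ψ y ≠ 0) ∧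
  ψ (-L/2) = 0 ∧ ψ (L/2) = 0 ∧
  ∀ y ∈ Icc (-L/2) (L/2),
    ψ'' y - ((k^2 + 1/Ld^2 : ℝ) : ℂ) * ψ y + ((q y : ℂ) / ((U y : ℂ) - c)) * ψ y = 0

open Real Topology intervalIntegral
open MeasureTheory (volume)

/-!
Howard's argument. With `μ = k² + 1/L_d²` and `η = ψ / (U - c)`, the mode equation becomes
`((U - c)² η')' = (μ (U - c) - B) (U - c) η`; pairing with `η̄` and integrating by parts gives
`∫ (U - c)² W = ∫ B (U - c) |η|²`. Since `c_i ≠ 0`, a real combination of the real and imaginary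
parts of this identity reads
`((c_r - r_c)² + c_i²) ∫ W = ∫ (U - r_c)² W + ∫ (r_c - U) B |η|²`.
Bounding both integrands by their maxima and `∫ |η|²` by `∫ W / (κ₀² + k²)` gives the claim; the
last bound is Wirtinger's inequality `(π/L)² ∫ |η|² ≤ ∫ |η'|²`, obtained from Picone's identity
with `t = -ω tan (ω (y - m))` for every `ω < π/L`.
-/

section Wirtinger

variable {E : Type*} [NormedAddCommGroup E] [InnerProductSpace ℝ E] {a b ω : ℝ} {f f' : ℝ → E}

theorem sq_mul_integral_norm_sq_le_of_riccati {t : ℝ → ℝ} (hab : a ≤ b)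
    (hf : ∀ y ∈ Icc a b, HasDerivAt f (f' y) y) (hf' : ContinuousOn f' (Icc a b))
    (ha : f a = 0) (hb : f b = 0) (ht : ∀ y ∈ Icc a b, HasDerivAt t (-ω ^ 2 - t y ^ 2) y) :
    ω ^ 2 * ∫ y in a..b, ‖f y‖ ^ 2 ≤ ∫ y in a..b, ‖f' y‖ ^ 2 := by
  set D : ℝ → ℝ := fun y => (-ω ^ 2 - t y ^ 2) * ‖f y‖ ^ 2 + t y * (2 * inner ℝ (f y) (f' y))
  have hfc : ContinuousOn f (Icc a b) := HasDerivAt.continuousOn hf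
  have htc : ContinuousOn t (Icc a b) := HasDerivAt.continuousOn ht
  have hDc : ContinuousOn D (Icc a b) := by fun_prop
  have hint : ∀ {g : ℝ → ℝ}, ContinuousOn g (Icc a b) → IntervalIntegrable g volume a b :=
    fun hg => hg.intervalIntegrable_of_Icc hab
  -- Picone's identity: `‖f'‖² = ‖f' - t f‖² + (t ‖f‖²)' + ω² ‖f‖²`.
  have hpicone : ∀ y, ‖f' y‖ ^ 2 = ‖f' y - t y • f y‖ ^ 2 + D y + ω ^ 2 * ‖f y‖ ^ 2 := by
    intro y
    rw [norm_sub_sq_real, norm_smul, inner_smul_right, real_inner_comm, Real.norm_eq_abs,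
      mul_pow, sq_abs]
    ring
  have hD : ∫ y in a..b, D y = 0 := by
    rw [integral_eq_sub_of_hasDerivAt (f := fun y => t y * ‖f y‖ ^ 2)
      (fun y hy => (ht y (uIcc_of_le hab ▸ hy)).mul (hf y (uIcc_of_le hab ▸ hy)).norm_sq)
      (hDc.intervalIntegrable_of_Icc hab)]
    simp [ha, hb]
  calc ω ^ 2 * ∫ y in a..b, ‖f y‖ ^ 2
      = ∫ y in a..b, (ω ^ 2 * ‖f y‖ ^ 2 + D y) := by
        rw [integral_add (hint (g := fun y => ω ^ 2 * ‖f y‖ ^ 2) (by fun_prop)) (hint hDc), hD,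
          add_zero, integral_const_mul]
    _ ≤ ∫ y in a..b, ‖f' y‖ ^ 2 := by
        refine integral_mono_on hab (hint (by fun_prop)) (hint (by fun_prop)) fun y _ => ?_
        rw [hpicone y]
        nlinarith [sq_nonneg ‖f' y - t y • f y‖]

theorem hasDerivAt_neg_mul_tan {m y : ℝ} (h : cos (ω * (y - m)) ≠ 0) :
    HasDerivAt (fun y => -ω * tan (ω * (y - m))) (-ω ^ 2 - (-ω * tan (ω * (y - m))) ^ 2) y := by
  have hlin : HasDerivAt (fun y => ω * (y - m)) ω y := by
    simpa using ((hasDerivAt_id y).sub_const m).const_mul ω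
  refine (((hasDerivAt_tan h).comp y hlin).const_mul (-ω)).congr_deriv ?_
  rw [tan_eq_sin_div_cos]
  field_simp
  nlinarith [sin_sq_add_cos_sq (ω * (y - m))]

theorem sq_mul_integral_norm_sq_le_of_mul_lt_pi (hab : a ≤ b) (hω : 0 ≤ ω)
    (hωπ : ω * (b - a) < π) (hf : ∀ y ∈ Icc a b, HasDerivAt f (f' y) y)
    (hf' : ContinuousOn f' (Icc a b)) (ha : f a = 0) (hb : f b = 0) :
    ω ^ 2 * ∫ y in a..b, ‖f y‖ ^ 2 ≤ ∫ y in a..b, ‖f' y‖ ^ 2 := by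
  refine sq_mul_integral_norm_sq_le_of_riccati hab hf hf' ha hb fun y hy =>
    hasDerivAt_neg_mul_tan (m := (a + b) / 2) (cos_pos_of_mem_Ioo ⟨?_, ?_⟩).ne'
  · nlinarith [hy.1, hy.2]
  · nlinarith [hy.1, hy.2]

theorem sq_pi_div_mul_integral_norm_sq_le (hab : a < b)
    (hf : ∀ y ∈ Icc a b, HasDerivAt f (f' y) y) (hf' : ContinuousOn f' (Icc a b))
    (ha : f a = 0) (hb : f b = 0) :
    (π / (b - a)) ^ 2 * ∫ y in a..b, ‖f y‖ ^ 2 ≤ ∫ y in a..b, ‖f' y‖ ^ 2 := by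
  have hba : 0 < b - a := sub_pos.2 hab
  refine le_of_tendsto (x := 𝓝[<] (π / (b - a)))
    (((continuous_pow 2).mul continuous_const).tendsto _ |>.mono_left nhdsWithin_le_nhds) ?_
  filter_upwards [Ioo_mem_nhdsLT (div_pos pi_pos hba)] with ω hω
  exact sq_mul_integral_norm_sq_le_of_mul_lt_pi hab.le hω.1.le
    ((lt_div_iff₀ hba).1 hω.2) hf hf' ha hb

theorem sq_pi_div_add_mul_integral_norm_sq_le (hab : a < b) (μ : ℝ)
    (hf : ∀ y ∈ Icc a b, HasDerivAt f (f' y) y) (hf' : ContinuousOn f' (Icc a b))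
    (ha : f a = 0) (hb : f b = 0) :
    ((π / (b - a)) ^ 2 + μ) * (∫ y in a..b, ‖f y‖ ^ 2)
      ≤ ∫ y in a..b, (‖f' y‖ ^ 2 + μ * ‖f y‖ ^ 2) := by
  have hfc : ContinuousOn f (Icc a b) := HasDerivAt.continuousOn hf
  rw [integral_add (ContinuousOn.intervalIntegrable_of_Icc hab.le (by fun_prop))
    (ContinuousOn.intervalIntegrable_of_Icc hab.le (by fun_prop)), integral_const_mul, add_mul]
  linarith [sq_pi_div_mul_integral_norm_sq_le hab hf hf' ha hb]

end Wirtinger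

theorem mem_Ioo_of_apply_ne_zero {β : Type*} [Zero β] {f : ℝ → β} {a b y : ℝ} (ha : f a = 0)
    (hb : f b = 0) (hy : y ∈ Icc a b) (hfy : f y ≠ 0) : y ∈ Ioo a b :=
  ⟨hy.1.lt_of_ne (by rintro rfl; exact hfy ha), hy.2.lt_of_ne (by rintro rfl; exact hfy hb)⟩

theorem integral_pos_of_continuousOn {f : ℝ → ℝ} {a b y₀ : ℝ} (hf : ContinuousOn f (Icc a b))
    (hf0 : ∀ y, 0 ≤ f y) (hy₀ : y₀ ∈ Ioo a b) (hfy₀ : 0 < f y₀) : 0 < ∫ y in a..b, f y := by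
  have hab : a ≤ b := (hy₀.1.trans hy₀.2).le
  rw [integral_pos_iff_support_of_nonneg_ae (.of_forall hf0) (hf.intervalIntegrable_of_Icc hab)]
  have hopen : IsOpen (Ioo a b ∩ f ⁻¹' Ioi 0) :=
    (hf.mono Ioo_subset_Icc_self).isOpen_inter_preimage isOpen_Ioo isOpen_Ioi
  refine ⟨hy₀.1.trans hy₀.2, (hopen.measure_pos volume ⟨y₀, hy₀, hfy₀⟩).trans_le
    (MeasureTheory.measure_mono fun y hy => ⟨hy.2.ne', Ioo_subset_Ioc_self hy.1⟩)⟩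

theorem Complex.ofReal_sub_ne_zero {c : ℂ} (hc : c.im ≠ 0) (x : ℝ) : (x : ℂ) - c ≠ 0 := by
  intro h
  exact hc (by simpa using congrArg Complex.im h)

def howardEta (U : ℝ → ℝ) (c : ℂ) (ψ : ℝ → ℂ) (y : ℝ) : ℂ := ψ y / (U y - c)

def howardEtaDeriv (U U' : ℝ → ℝ) (c : ℂ) (ψ ψ' : ℝ → ℂ) (y : ℝ) : ℂ :=
  (ψ' y * (U y - c) - ψ y * U' y) / (U y - c) ^ 2

section Howard

variable {U U' U'' q : ℝ → ℝ} {c : ℂ} {ψ ψ' ψ'' : ℝ → ℂ} {y : ℝ}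

theorem hasDerivAt_howardEta (hc : c.im ≠ 0) (hU : HasDerivAt U (U' y) y)
    (hψ : HasDerivAt ψ (ψ' y) y) :
    HasDerivAt (howardEta U c ψ) (howardEtaDeriv U U' c ψ ψ' y) y :=
  hψ.div (hU.ofReal_comp.sub_const c) (Complex.ofReal_sub_ne_zero hc _)

theorem continuousOn_howardEtaDeriv {s : Set ℝ} (hc : c.im ≠ 0) (hU : ContinuousOn U s)
    (hU' : ContinuousOn U' s) (hψ : ContinuousOn ψ s) (hψ' : ContinuousOn ψ' s) :
    ContinuousOn (howardEtaDeriv U U' c ψ ψ') s :=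
  ContinuousOn.div (by fun_prop) (by fun_prop) fun y _ =>
    pow_ne_zero 2 (Complex.ofReal_sub_ne_zero hc (U y))

theorem hasDerivAt_sq_mul_howardEtaDeriv {μ : ℝ} (hc : c.im ≠ 0) (hU : HasDerivAt U (U' y) y)
    (hU' : HasDerivAt U' (U'' y) y) (hψ : HasDerivAt ψ (ψ' y) y) (hψ' : HasDerivAt ψ' (ψ'' y) y)
    (hode : ψ'' y - μ * ψ y + q y / (U y - c) * ψ y = 0) :
    HasDerivAt (fun y => ((U y : ℂ) - c) ^ 2 * howardEtaDeriv U U' c ψ ψ' y)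
      ((μ * (U y - c) - (q y + U'' y : ℝ)) * (U y - c) * howardEta U c ψ y) y := by
  have hV := Complex.ofReal_sub_ne_zero hc
  have hflux : (fun y => ((U y : ℂ) - c) ^ 2 * howardEtaDeriv U U' c ψ ψ' y)
      = fun y => ψ' y * (U y - c) - ψ y * U' y := by
    funext y
    rw [howardEtaDeriv, mul_div_cancel₀ _ (pow_ne_zero 2 (hV _))]
  rw [hflux]
  refine ((hψ'.mul (hU.ofReal_comp.sub_const c)).sub (hψ.mul hU'.ofReal_comp)).congr_deriv ?_
  have hode' : ψ'' y * (U y - c) = μ * ψ y * (U y - c) - q y * ψ y := by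
    field_simp [hV (U y)] at hode
    linear_combination hode
  rw [howardEta]
  field_simp [hV (U y)]
  push_cast
  linear_combination hode'

theorem integral_sq_mul_energy_sub_eq_zero {a b μ : ℝ} (hab : a ≤ b) {V η η' : ℝ → ℂ}
    {B : ℝ → ℝ} (hV : ContinuousOn V (Icc a b)) (hB : ContinuousOn B (Icc a b))
    (hη : ∀ y ∈ Icc a b, HasDerivAt η (η' y) y) (hη' : ContinuousOn η' (Icc a b))
    (ha : η a = 0) (hb : η b = 0)
    (hflux : ∀ y ∈ Icc a b,
      HasDerivAt (fun y => V y ^ 2 * η' y) ((μ * V y - B y) * V y * η y) y) :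
    ∫ y in a..b, (V y ^ 2 * ((‖η' y‖ ^ 2 + μ * ‖η y‖ ^ 2 : ℝ) : ℂ)
      - B y * V y * ((‖η y‖ ^ 2 : ℝ) : ℂ)) = 0 := by
  rw [← uIcc_of_le hab] at hV hB hη hη' hflux
  have hηc : ContinuousOn η (uIcc a b) := HasDerivAt.continuousOn hη
  have hparts := integral_mul_deriv_eq_deriv_mul (fun y hy => (hη y hy).star) hflux
    (ContinuousOn.intervalIntegrable (by fun_prop)) (ContinuousOn.intervalIntegrable (by fun_prop))
  simp only [ha, hb, star_zero, zero_mul, sub_zero, zero_sub] at hparts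
  have hpt : ∀ y, V y ^ 2 * ((‖η' y‖ ^ 2 + μ * ‖η y‖ ^ 2 : ℝ) : ℂ)
      - B y * V y * ((‖η y‖ ^ 2 : ℝ) : ℂ)
      = star (η y) * ((μ * V y - B y) * V y * η y) + star (η' y) * (V y ^ 2 * η' y) := by
    intro y
    simp only [Complex.star_def]
    push_cast
    linear_combination (-(μ * V y - B y) * V y) * Complex.conj_mul' (η y)
      - V y ^ 2 * Complex.conj_mul' (η' y)
  simp_rw [hpt]
  rw [integral_add, hparts, neg_add_cancel]
  all_goals exact ContinuousOn.intervalIntegrable (by fun_prop)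

end Howard

theorem integral_semicircle_eq_zero {a b rc : ℝ} (hab : a ≤ b) {U B e W : ℝ → ℝ} {c : ℂ}
    (hc : c.im ≠ 0) (hU : ContinuousOn U (Icc a b)) (hB : ContinuousOn B (Icc a b))
    (he : ContinuousOn e (Icc a b)) (hW : ContinuousOn W (Icc a b))
    (h : ∫ y in a..b, (((U y : ℂ) - c) ^ 2 * W y - B y * (U y - c) * e y) = 0) :
    ∫ y in a..b, (((U y - rc) ^ 2 - ((c.re - rc) ^ 2 + c.im ^ 2)) * W y
      + (rc - U y) * B y * e y) = 0 := by
  set F : ℝ → ℂ := fun y => ((U y : ℂ) - c) ^ 2 * W y - B y * (U y - c) * e y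
  have hF : ContinuousOn F (Icc a b) := by fun_prop
  have hpt : ∀ y, ((U y - rc) ^ 2 - ((c.re - rc) ^ 2 + c.im ^ 2)) * W y + (rc - U y) * B y * e y
      = (F y).re - (c.re - rc) / c.im * (F y).im := by
    intro y
    simp only [F, Complex.sub_re, Complex.sub_im, Complex.mul_re, Complex.mul_im, sq,
      Complex.ofReal_re, Complex.ofReal_im]
    field_simp
    ring
  have hre : ∫ y in a..b, (F y).re = (∫ y in a..b, F y).re :=
    Complex.reCLM.intervalIntegral_comp_comm (hF.intervalIntegrable_of_Icc hab)
  have him : ∫ y in a..b, (F y).im = (∫ y in a..b, F y).im :=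
    Complex.imCLM.intervalIntegral_comp_comm (hF.intervalIntegrable_of_Icc hab)
  simp_rw [hpt]
  rw [integral_sub, integral_const_mul, hre, him, h, Complex.zero_re, Complex.zero_im, mul_zero,
    sub_zero]
  · exact (Complex.continuous_re.comp_continuousOn hF).intervalIntegrable_of_Icc hab
  · exact ((Complex.continuous_im.comp_continuousOn hF).const_mul _).intervalIntegrable_of_Icc hab

theorem le_add_one_div_mul_of_integral_eq_zero {a b m M₁ M₂ K : ℝ} (hab : a ≤ b) {F G e W : ℝ → ℝ}
    (hF : ContinuousOn F (Icc a b)) (hG : ContinuousOn G (Icc a b))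
    (he : ContinuousOn e (Icc a b)) (hW : ContinuousOn W (Icc a b))
    (hFM : ∀ y ∈ Icc a b, F y ≤ M₁) (hGM : ∀ y ∈ Icc a b, G y ≤ M₂) (hM₂ : 0 ≤ M₂)
    (he0 : ∀ y, 0 ≤ e y) (hW0 : ∀ y, 0 ≤ W y) (hK : 0 < K)
    (hKW : K * (∫ y in a..b, e y) ≤ ∫ y in a..b, W y) (hWpos : 0 < ∫ y in a..b, W y)
    (h : ∫ y in a..b, ((F y - m) * W y + G y * e y) = 0) :
    m ≤ M₁ + 1 / K * M₂ := by
  have hint : ∀ {g : ℝ → ℝ}, ContinuousOn g (Icc a b) → IntervalIntegrable g volume a b :=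
    fun hg => hg.intervalIntegrable_of_Icc hab
  have hbound : 0 ≤ (M₁ - m) * (∫ y in a..b, W y) + M₂ * ∫ y in a..b, e y := calc
    0 = ∫ y in a..b, ((F y - m) * W y + G y * e y) := h.symm
    _ ≤ ∫ y in a..b, ((M₁ - m) * W y + M₂ * e y) := by
      refine integral_mono_on hab (hint (by fun_prop)) (hint (by fun_prop)) fun y hy => ?_
      have := mul_le_mul_of_nonneg_right (hFM y hy) (hW0 y)
      have := mul_le_mul_of_nonneg_right (hGM y hy) (he0 y)
      linarith
    _ = (M₁ - m) * (∫ y in a..b, W y) + M₂ * ∫ y in a..b, e y := by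
      rw [integral_add (hint (g := fun y => (M₁ - m) * W y) (by fun_prop))
        (hint (g := fun y => M₂ * e y) (by fun_prop)), integral_const_mul, integral_const_mul]
  have hMe : M₂ * ∫ y in a..b, e y ≤ 1 / K * M₂ * ∫ y in a..b, W y := by
    rw [one_div_mul_eq_div, div_mul_eq_mul_div, le_div_iff₀ hK]
    nlinarith [mul_le_mul_of_nonneg_left hKW hM₂]
  refine le_of_mul_le_mul_right ?_ hWpos
  linarith

theorem semicircle_bound_of_integral_eq_zero {a b K : ℝ} (hab : a ≤ b) {U B e W : ℝ → ℝ}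
    {c : ℂ} (hc : c.im ≠ 0) (hU : ContinuousOn U (Icc a b)) (hB : ContinuousOn B (Icc a b))
    (he : ContinuousOn e (Icc a b)) (hW : ContinuousOn W (Icc a b)) (he0 : ∀ y, 0 ≤ e y)
    (hW0 : ∀ y, 0 ≤ W y) (hK : 0 < K) (hKW : K * (∫ y in a..b, e y) ≤ ∫ y in a..b, W y)
    (hepos : 0 < ∫ y in a..b, e y)
    (h : ∫ y in a..b, (((U y : ℂ) - c) ^ 2 * W y - B y * (U y - c) * e y) = 0) (rc : ℝ) :
    (c.re - rc) ^ 2 + c.im ^ 2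
      ≤ sSup ((fun y => (U y - rc) ^ 2) '' Icc a b)
        + 1 / K * max 0 (sSup ((fun y => (rc - U y) * B y) '' Icc a b)) := by
  have hsSup : ∀ {g : ℝ → ℝ}, ContinuousOn g (Icc a b) → ∀ y ∈ Icc a b,
      g y ≤ sSup (g '' Icc a b) :=
    fun hg y hy => le_csSup (isCompact_Icc.bddAbove_image hg) (mem_image_of_mem _ hy)
  exact le_add_one_div_mul_of_integral_eq_zero hab (F := fun y => (U y - rc) ^ 2)
    (G := fun y => (rc - U y) * B y) (by fun_prop) (by fun_prop) he hW (hsSup (by fun_prop))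
    (fun y hy => le_max_of_le_right (hsSup (g := fun y => (rc - U y) * B y) (by fun_prop) y hy))
    (le_max_left _ _) he0 hW0 hK hKW ((mul_pos hK hepos).trans_le hKW)
    (integral_semicircle_eq_zero hab hc hU hB he hW h)

theorem appendixD_semicircle_bound_general
    (L Ld : ℝ)
    (U q U' U'' : ℝ → ℝ)
    (hq : ContDiffOn ℝ 1 q (Icc (-L/2) (L/2)))
    (hU' : ∀ y ∈ Icc (-L/2) (L/2), HasDerivAt U (U' y) y)
    (hU'' : ∀ y ∈ Icc (-L/2) (L/2), HasDerivAt U' (U'' y) y)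
    (hU''c : ContinuousOn U'' (Icc (-L/2) (L/2)))
    (k : ℝ) (c : ℂ) (ψ ψ' ψ'' : ℝ → ℂ)
    (hmode : IsUnstableMode L Ld k U q c ψ ψ' ψ'')
    (B : ℝ → ℝ) (hB : B = fun y => q y + U'' y) :
    ∀ rc : ℝ,
      (c.re - rc) ^ 2 + c.im ^ 2
        ≤ sSup ((fun y => (U y - rc) ^ 2) '' Icc (-L/2) (L/2))
          + 1 / ((Real.pi ^ 2 / L ^ 2 + 1 / Ld ^ 2) + k ^ 2)
            * max 0 (sSup ((fun y => (rc - U y) * B y) '' Icc (-L/2) (L/2))) := by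
  obtain ⟨hc, hψ, hψ', -, ⟨y₀, hy₀, hψy₀⟩, hψa, hψb, hode⟩ := hmode
  subst hB
  set μ : ℝ := k ^ 2 + 1 / Ld ^ 2
  set η := howardEta U c ψ
  set η' := howardEtaDeriv U U' c ψ ψ'
  have hy₀' := mem_Ioo_of_apply_ne_zero hψa hψb hy₀ hψy₀
  have hab : -L/2 < L/2 := hy₀'.1.trans hy₀'.2
  have hUc : ContinuousOn U (Icc (-L/2) (L/2)) := HasDerivAt.continuousOn hU'
  have hBc : ContinuousOn (fun y => q y + U'' y) (Icc (-L/2) (L/2)) := hq.continuousOn.add hU''c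
  have hη : ∀ y ∈ Icc (-L/2) (L/2), HasDerivAt η (η' y) y :=
    fun y hy => hasDerivAt_howardEta hc (hU' y hy) (hψ y hy)
  have hηc : ContinuousOn η (Icc (-L/2) (L/2)) := HasDerivAt.continuousOn hη
  have hη'c : ContinuousOn η' (Icc (-L/2) (L/2)) :=
    continuousOn_howardEtaDeriv hc hUc (HasDerivAt.continuousOn hU'') (HasDerivAt.continuousOn hψ)
      (HasDerivAt.continuousOn hψ')
  have hηa : η (-L/2) = 0 := by simp [η, howardEta, hψa]
  have hηb : η (L/2) = 0 := by simp [η, howardEta, hψb]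
  have hhoward := integral_sq_mul_energy_sub_eq_zero (μ := μ) hab.le (by fun_prop) hBc hη hη'c
    hηa hηb fun y hy =>
      hasDerivAt_sq_mul_howardEtaDeriv hc (hU' y hy) (hU'' y hy) (hψ y hy) (hψ' y hy) (hode y hy)
  have hKW := sq_pi_div_add_mul_integral_norm_sq_le hab μ hη hη'c hηa hηb
  rw [show (π / (L / 2 - -L / 2)) ^ 2 + μ = π ^ 2 / L ^ 2 + 1 / Ld ^ 2 + k ^ 2 by
    rw [show L / 2 - -L / 2 = L by ring, div_pow]; ring] at hKW
  have hK : 0 < π ^ 2 / L ^ 2 + 1 / Ld ^ 2 + k ^ 2 := by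
    have : 0 < L := by linarith
    positivity
  have hepos : 0 < ∫ y in (-L/2)..(L/2), ‖η y‖ ^ 2 :=
    integral_pos_of_continuousOn (by fun_prop) (fun _ => sq_nonneg _)
      hy₀' (pow_pos (norm_pos_iff.2 (div_ne_zero hψy₀ (Complex.ofReal_sub_ne_zero hc _))) 2)
  exact semicircle_bound_of_integral_eq_zero hab.le hc hUc hBc (by fun_prop) (by fun_prop)
    (fun _ => by positivity) (fun _ => by positivity) hK hKW hepos hhoward

/-- Appendix D inner-envelope semicircle bound ((D9)–(D11)): for an unstable mode and
every real `r_c`, `(c_r − r_c)² + c_i² ≤ R(r_c)²`, where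
`R(r_c)² = max_{y} (U(y) − r_c)² + (κ₀² + k²)⁻¹ · max(0, max_y (r_c − U(y)) B(y))`
with `B = q + U''` and `κ₀² = π²/L² + 1/L_d²`. -/
theorem appendixD_semicircle_bound
    (L Ld : ℝ) (hL : 0 < L) (hLd : 0 < Ld)
    (U q U' U'' : ℝ → ℝ)
    (hq : ContDiffOn ℝ 1 q (Icc (-L/2) (L/2)))
    (hU' : ∀ y ∈ Icc (-L/2) (L/2), HasDerivAt U (U' y) y)
    (hU'' : ∀ y ∈ Icc (-L/2) (L/2), HasDerivAt U' (U'' y) y)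
    (hU''c : ContinuousOn U'' (Icc (-L/2) (L/2)))
    (k : ℝ) (hk : 0 ≤ k) (c : ℂ) (ψ ψ' ψ'' : ℝ → ℂ)
    (hmode : IsUnstableMode L Ld k U q c ψ ψ' ψ'')
    (B : ℝ → ℝ) (hB : B = fun y => q y + U'' y) :
    ∀ rc : ℝ,
      (c.re - rc) ^ 2 + c.im ^ 2
        ≤ sSup ((fun y => (U y - rc) ^ 2) '' Icc (-L/2) (L/2))
          + 1 / ((Real.pi ^ 2 / L ^ 2 + 1 / Ld ^ 2) + k ^ 2)
            * max 0 (sSup ((fun y => (rc - U y) * B y) '' Icc (-L/2) (L/2))) :=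
  appendixD_semicircle_bound_general L Ld U q U' U'' hq hU' hU'' hU''c k c ψ ψ' ψ'' hmode B hB
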